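/- arXiv:2203.10313 — 3 statements merged into one kernel-verified Lean document; each statement's English description precedes it below -/
import Mathlib

section
/- Let V, W be finite-dimensional complex vector spaces, U = V ⊕ (Sym²V ⊗ W), Ŝ = { v + v²⊗w : v ∈ V, w ∈ W }, and β = v + v²⊗w with v ≠ 0, w ≠ 0. Write V₀ = ℂv, W₀ = ℂw. Then the second osculating space of Ŝ at β, namely T_β^{(2)}Ŝ = T_βŜ + Image(II_β), equals V ⊕ (Sym²V ⊗ W₀ + (V₀∘V) ⊗ W), and the quotient U / T_β^{(2)}Ŝ is canonically isomorphic to Sym²(V/V₀) ⊗ (W/W₀). -/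
open TensorProduct

noncomputable section

/-- The antisymmetric relations in `V ⊗ V`. -/
def antisymRel (V : Type) [AddCommGroup V] [Module ℂ V] : Submodule ℂ (V ⊗[ℂ] V) :=
  Submodule.span ℂ {x | ∃ v w : V, x = v ⊗ₜ[ℂ] w - w ⊗ₜ[ℂ] v}

/-- The second symmetric power `Sym²V`, as a quotient of `V ⊗ V`. -/
def Sym2M (V : Type) [AddCommGroup V] [Module ℂ V] : Type :=
  (V ⊗[ℂ] V) ⧸ antisymRel V

instance (V : Type) [AddCommGroup V] [Module ℂ V] : AddCommGroup (Sym2M V) :=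
  inferInstanceAs (AddCommGroup ((V ⊗[ℂ] V) ⧸ antisymRel V))

instance (V : Type) [AddCommGroup V] [Module ℂ V] : Module ℂ (Sym2M V) :=
  inferInstanceAs (Module ℂ ((V ⊗[ℂ] V) ⧸ antisymRel V))

instance (V : Type) [AddCommGroup V] [Module ℂ V] [FiniteDimensional ℂ V] :
    FiniteDimensional ℂ (Sym2M V) :=
  inferInstanceAs (FiniteDimensional ℂ ((V ⊗[ℂ] V) ⧸ antisymRel V))

/-- The square `v² = v ⊗ v` in `Sym²V`. -/
def sqr {V : Type} [AddCommGroup V] [Module ℂ V] (v : V) : Sym2M V :=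
  Submodule.Quotient.mk (v ⊗ₜ[ℂ] v)

/-- The symmetric product `v ∘ v' = (1/2)(v ⊗ v' + v' ⊗ v)` in `Sym²V`. -/
def symProd {V : Type} [AddCommGroup V] [Module ℂ V] (v v' : V) : Sym2M V :=
  Submodule.Quotient.mk ((1/2 : ℂ) • (v ⊗ₜ[ℂ] v' + v' ⊗ₜ[ℂ] v))

/-- The symmetric relations in `V ⊗ V` (spanned by squares). -/
def symRel (V : Type) [AddCommGroup V] [Module ℂ V] : Submodule ℂ (V ⊗[ℂ] V) :=
  Submodule.span ℂ {x | ∃ v : V, x = v ⊗ₜ[ℂ] v}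

/-- The second exterior power `∧²V`, as a quotient of `V ⊗ V`. -/
def Alt2M (V : Type) [AddCommGroup V] [Module ℂ V] : Type :=
  (V ⊗[ℂ] V) ⧸ symRel V

instance (V : Type) [AddCommGroup V] [Module ℂ V] : AddCommGroup (Alt2M V) :=
  inferInstanceAs (AddCommGroup ((V ⊗[ℂ] V) ⧸ symRel V))

instance (V : Type) [AddCommGroup V] [Module ℂ V] : Module ℂ (Alt2M V) :=
  inferInstanceAs (Module ℂ ((V ⊗[ℂ] V) ⧸ symRel V))

instance (V : Type) [AddCommGroup V] [Module ℂ V] [FiniteDimensional ℂ V] :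
    FiniteDimensional ℂ (Alt2M V) :=
  inferInstanceAs (FiniteDimensional ℂ ((V ⊗[ℂ] V) ⧸ symRel V))

/-- The wedge `v ∧ w` in `∧²V`. -/
def wedge {V : Type} [AddCommGroup V] [Module ℂ V] (v w : V) : Alt2M V :=
  Submodule.Quotient.mk (v ⊗ₜ[ℂ] w)

/-- For subspaces `A, B ⊆ V`, the subspace `A∘B ⊆ Sym²V` spanned by products `a∘b`. -/
def circSub {V : Type} [AddCommGroup V] [Module ℂ V] (A B : Submodule ℂ V) :
    Submodule ℂ (Sym2M V) :=
  Submodule.span ℂ {x | ∃ a ∈ A, ∃ b ∈ B, x = symProd a b}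

/-- For subspaces `P ⊆ M`, `Q ⊆ N`, the subspace `P ⊗ Q ⊆ M ⊗ N`. -/
def tspan {M N : Type} [AddCommGroup M] [Module ℂ M] [AddCommGroup N] [Module ℂ N]
    (P : Submodule ℂ M) (Q : Submodule ℂ N) : Submodule ℂ (M ⊗[ℂ] N) :=
  Submodule.span ℂ {x | ∃ p ∈ P, ∃ q ∈ Q, x = p ⊗ₜ[ℂ] q}

section Stmt3Aux

open LinearMap Submodule

variable {V W V' : Type} [AddCommGroup V] [Module ℂ V] [AddCommGroup W] [Module ℂ W]
  [AddCommGroup V'] [Module ℂ V']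

lemma mk_tmul (a b : V) :
    (Submodule.Quotient.mk (a ⊗ₜ[ℂ] b) : Sym2M V) = symProd a b := by
  unfold symProd
  rw [Submodule.Quotient.eq]
  have h : a ⊗ₜ[ℂ] b - (1/2 : ℂ) • (a ⊗ₜ[ℂ] b + b ⊗ₜ[ℂ] a)
      = (1/2 : ℂ) • (a ⊗ₜ[ℂ] b - b ⊗ₜ[ℂ] a) := by module
  rw [h]
  exact Submodule.smul_mem _ _ (Submodule.subset_span ⟨a, b, rfl⟩)

lemma symProd_comm (a b : V) : symProd a b = symProd b a := by
  unfold symProd; rw [add_comm (a ⊗ₜ[ℂ] b)]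

lemma sqr_eq (a : V) : sqr a = symProd a a := mk_tmul a a

lemma symProd_smul_left (c : ℂ) (a b : V) : symProd (c • a) b = c • symProd a b := by
  rw [← mk_tmul, ← mk_tmul, ← TensorProduct.smul_tmul', Submodule.Quotient.mk_smul]
  rfl

lemma range_lTensor (Q : Submodule ℂ W) :
    LinearMap.range (LinearMap.lTensor V Q.subtype) = tspan (⊤ : Submodule ℂ V) Q := by
  apply le_antisymm
  · rw [LinearMap.range_eq_map, ← TensorProduct.span_tmul_eq_top ℂ V Q, Submodule.map_span]
    refine Submodule.span_le.2 ?_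
    rintro x ⟨y, ⟨m, q, rfl⟩, rfl⟩
    exact Submodule.subset_span ⟨m, trivial, q, q.2, by simp⟩
  · refine Submodule.span_le.2 ?_
    rintro x ⟨p, -, q, hq, rfl⟩
    exact ⟨p ⊗ₜ ⟨q, hq⟩, by simp⟩

lemma range_rTensor (P : Submodule ℂ V) :
    LinearMap.range (LinearMap.rTensor W P.subtype) = tspan P (⊤ : Submodule ℂ W) := by
  apply le_antisymm
  · rw [LinearMap.range_eq_map, ← TensorProduct.span_tmul_eq_top ℂ P W, Submodule.map_span]
    refine Submodule.span_le.2 ?_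
    rintro x ⟨y, ⟨p, n, rfl⟩, rfl⟩
    exact Submodule.subset_span ⟨p, p.2, n, trivial, by simp⟩
  · refine Submodule.span_le.2 ?_
    rintro x ⟨p, hp, q, -, rfl⟩
    exact ⟨(⟨p, hp⟩ : P) ⊗ₜ q, by simp⟩

/-- Functoriality of `Sym2M`. -/
def sym2Map (f : V →ₗ[ℂ] V') : Sym2M V →ₗ[ℂ] Sym2M V' :=
  Submodule.mapQ _ _ (TensorProduct.map f f) (by
    refine Submodule.span_le.2 ?_
    rintro x ⟨a, b, rfl⟩
    simp only [SetLike.mem_coe, Submodule.mem_comap, map_sub, TensorProduct.map_tmul]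
    exact Submodule.subset_span ⟨f a, f b, rfl⟩)

lemma sym2Map_surjective {f : V →ₗ[ℂ] V'} (hf : Function.Surjective f) :
    Function.Surjective (sym2Map f) := by
  intro y
  obtain ⟨t', rfl⟩ := Submodule.Quotient.mk_surjective _ y
  obtain ⟨t, rfl⟩ := TensorProduct.map_surjective hf hf t'
  exact ⟨Submodule.Quotient.mk t, rfl⟩

lemma top_eq_span_symProd :
    (⊤ : Submodule ℂ (Sym2M V)) = Submodule.span ℂ {x | ∃ a b : V, x = symProd a b} := by
  refine le_antisymm ?_ le_top
  have htop : (⊤ : Submodule ℂ (Sym2M V)) = LinearMap.range (antisymRel V).mkQ :=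
    (Submodule.range_mkQ _).symm
  rw [htop, LinearMap.range_eq_map,
    ← TensorProduct.span_tmul_eq_top ℂ V V, Submodule.map_span]
  refine Submodule.span_le.2 ?_
  rintro x ⟨t, ⟨a, b, rfl⟩, rfl⟩
  exact Submodule.subset_span (R := ℂ) (M := Sym2M V) ⟨a, b, by rw [Submodule.mkQ_apply, mk_tmul]⟩

lemma circSub_eq_map (V₀ : Submodule ℂ V) :
    circSub V₀ (⊤ : Submodule ℂ V) =
      Submodule.map (antisymRel V).mkQ (tspan V₀ (⊤ : Submodule ℂ V)) := by
  apply le_antisymm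
  · refine Submodule.span_le.2 ?_
    rintro x ⟨a, ha, b, hb, rfl⟩
    exact ⟨a ⊗ₜ b, Submodule.subset_span ⟨a, ha, b, hb, rfl⟩,
      by rw [Submodule.mkQ_apply, mk_tmul]⟩
  · have : tspan V₀ (⊤ : Submodule ℂ V)
        = Submodule.span ℂ {x | ∃ p ∈ V₀, ∃ q ∈ (⊤ : Submodule ℂ V), x = p ⊗ₜ[ℂ] q} := rfl
    rw [this, Submodule.map_span]
    refine Submodule.span_le.2 ?_
    rintro x ⟨t, ⟨a, ha, b, hb, rfl⟩, rfl⟩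
    exact Submodule.subset_span (R := ℂ) (M := Sym2M V) ⟨a, ha, b, hb, mk_tmul a b⟩

lemma map_tspan_top_le (V₀ : Submodule ℂ V) :
    Submodule.map (antisymRel V).mkQ (tspan (⊤ : Submodule ℂ V) V₀) ≤
      circSub V₀ (⊤ : Submodule ℂ V) := by
  have : tspan (⊤ : Submodule ℂ V) V₀
      = Submodule.span ℂ {x | ∃ p ∈ (⊤ : Submodule ℂ V), ∃ q ∈ V₀, x = p ⊗ₜ[ℂ] q} := rfl
  rw [this, Submodule.map_span]
  refine Submodule.span_le.2 ?_
  rintro x ⟨t, ⟨a, ha, b, hb, rfl⟩, rfl⟩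
  exact Submodule.subset_span (R := ℂ) (M := Sym2M V) ⟨b, hb, a, ha, (mk_tmul a b).trans (symProd_comm a b)⟩

lemma antisymRel_quot (V₀ : Submodule ℂ V) :
    antisymRel (V ⧸ V₀) = Submodule.map (TensorProduct.map V₀.mkQ V₀.mkQ) (antisymRel V) := by
  apply le_antisymm
  · refine Submodule.span_le.2 ?_
    rintro x ⟨a, b, rfl⟩
    obtain ⟨a, rfl⟩ := Submodule.Quotient.mk_surjective V₀ a
    obtain ⟨b, rfl⟩ := Submodule.Quotient.mk_surjective V₀ b
    exact ⟨a ⊗ₜ b - b ⊗ₜ a, Submodule.subset_span ⟨a, b, rfl⟩,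
      by simp only [map_sub, TensorProduct.map_tmul, Submodule.mkQ_apply]⟩
  · rw [Submodule.map_le_iff_le_comap]
    refine Submodule.span_le.2 ?_
    rintro x ⟨a, b, rfl⟩
    simp only [SetLike.mem_coe, Submodule.mem_comap, map_sub, TensorProduct.map_tmul]
    exact Submodule.subset_span ⟨_, _, rfl⟩

lemma ker_sym2Map_mkQ (V₀ : Submodule ℂ V) :
    LinearMap.ker (sym2Map V₀.mkQ) = circSub V₀ (⊤ : Submodule ℂ V) := by
  unfold sym2Map Submodule.mapQ
  erw [Submodule.ker_liftQ, LinearMap.ker_comp, Submodule.ker_mkQ]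
  rw [antisymRel_quot V₀,
    Submodule.comap_map_eq,
    TensorProduct.map_ker (LinearMap.exact_subtype_mkQ V₀) (Submodule.mkQ_surjective V₀)
      (LinearMap.exact_subtype_mkQ V₀) (Submodule.mkQ_surjective V₀),
    range_lTensor, range_rTensor, Submodule.map_sup, Submodule.map_sup,
    Submodule.mkQ_map_self, bot_sup_eq]
  apply le_antisymm
  · exact sup_le (map_tspan_top_le V₀) (circSub_eq_map V₀).ge
  · rw [circSub_eq_map V₀]; exact le_sup_right

lemma ker_bigmap (V₀ : Submodule ℂ V) (W₀ : Submodule ℂ W) :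
    LinearMap.ker (TensorProduct.map (sym2Map V₀.mkQ) W₀.mkQ) =
      tspan (⊤ : Submodule ℂ (Sym2M V)) W₀ ⊔
        tspan (circSub V₀ (⊤ : Submodule ℂ V)) (⊤ : Submodule ℂ W) := by
  have hex : Function.Exact (circSub V₀ (⊤ : Submodule ℂ V)).subtype (sym2Map V₀.mkQ) := by
    rw [LinearMap.exact_iff, Submodule.range_subtype, ker_sym2Map_mkQ]
  rw [TensorProduct.map_ker hex (sym2Map_surjective (Submodule.mkQ_surjective V₀))
      (LinearMap.exact_subtype_mkQ W₀) (Submodule.mkQ_surjective W₀),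
    range_lTensor, range_rTensor]

lemma comap_snd_eq (A B : Type) [AddCommGroup A] [Module ℂ A] [AddCommGroup B] [Module ℂ B]
    (K : Submodule ℂ B) :
    Submodule.comap (LinearMap.snd ℂ A B) K =
      LinearMap.range (LinearMap.inl ℂ A B) ⊔ Submodule.map (LinearMap.inr ℂ A B) K := by
  apply le_antisymm
  · rintro ⟨a, b⟩ hb
    exact Submodule.mem_sup.2 ⟨(a, 0), ⟨a, rfl⟩, (0, b), ⟨b, hb, rfl⟩, by simp⟩
  · apply sup_le
    · rintro x ⟨a, rfl⟩
      simp [Submodule.mem_comap]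
    · rintro x ⟨b, hb, rfl⟩
      simpa [Submodule.mem_comap] using hb

end Stmt3Aux

/-- the second osculating space `T_β⁽²⁾Ŝ = T_βŜ + Image(II_β)` equals
`V ⊕ (Sym²V ⊗ W₀ + (V₀∘V) ⊗ W)`, and `U / T_β⁽²⁾Ŝ ≅ Sym²(V/V₀) ⊗ (W/W₀)`. -/
theorem stmt3 (V W : Type) [AddCommGroup V] [Module ℂ V] [AddCommGroup W] [Module ℂ W]
    [FiniteDimensional ℂ V] [FiniteDimensional ℂ W]
    (h2 : 2 ≤ Module.finrank ℂ V) (h1 : 2 ≤ Module.finrank ℂ W)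
    (v : V) (w : W) (hv : v ≠ 0) (hw : w ≠ 0)
    -- the tangent space `T_βŜ`
    (T : Submodule ℂ (V × (Sym2M V ⊗[ℂ] W)))
    (hT : T = Submodule.span ℂ
      {u | ∃ (v' : V) (w' : W),
        u = (v', ((2 : ℂ) • symProd v v') ⊗ₜ[ℂ] w + (sqr v) ⊗ₜ[ℂ] w')})
    -- the second osculating space `T_β⁽²⁾Ŝ = T_βŜ + Image(II_β)`, where the image of the
    -- second fundamental form is spanned by the elements `2 v'∘v'' ⊗ w` and `2 (v∘v')⊗w'`
    (T2 : Submodule ℂ (V × (Sym2M V ⊗[ℂ] W)))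
    (hT2 : T2 = T ⊔
      Submodule.span ℂ
        {u | ∃ (v' v'' : V), u = ((0 : V), ((2 : ℂ) • symProd v' v'') ⊗ₜ[ℂ] w)} ⊔
      Submodule.span ℂ
        {u | ∃ (v' : V) (w' : W), u = ((0 : V), ((2 : ℂ) • symProd v v') ⊗ₜ[ℂ] w')}) :
    T2 = LinearMap.range (LinearMap.inl ℂ V (Sym2M V ⊗[ℂ] W)) ⊔
        Submodule.map (LinearMap.inr ℂ V (Sym2M V ⊗[ℂ] W))
          (tspan (⊤ : Submodule ℂ (Sym2M V)) (Submodule.span ℂ {w}) ⊔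
           tspan (circSub (Submodule.span ℂ {v}) ⊤) (⊤ : Submodule ℂ W)) ∧
      Nonempty (((V × (Sym2M V ⊗[ℂ] W)) ⧸ T2) ≃ₗ[ℂ]
        (Sym2M (V ⧸ Submodule.span ℂ {v}) ⊗[ℂ] (W ⧸ Submodule.span ℂ {w}))) := by
  have e2 : ((1 : ℂ)/2) * 2 = 1 := by norm_num
  -- membership facts for `T2`
  have hA : ∀ (v' : V) (w' : W),
      (v', ((2 : ℂ) • symProd v v') ⊗ₜ[ℂ] w + (sqr v) ⊗ₜ[ℂ] w') ∈ T2 := by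
    intro v' w'
    rw [hT2, hT]
    exact Submodule.mem_sup_left (Submodule.mem_sup_left (Submodule.subset_span ⟨v', w', rfl⟩))
  have hB : ∀ a b : V, ((0 : V), ((2 : ℂ) • symProd a b) ⊗ₜ[ℂ] w) ∈ T2 := by
    intro a b
    rw [hT2]
    exact Submodule.mem_sup_left (Submodule.mem_sup_right (Submodule.subset_span ⟨a, b, rfl⟩))
  have hC : ∀ (b : V) (q : W), ((0 : V), ((2 : ℂ) • symProd v b) ⊗ₜ[ℂ] q) ∈ T2 := by
    intro b q
    rw [hT2]
    exact Submodule.mem_sup_right (Submodule.subset_span ⟨b, q, rfl⟩)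
  have hB' : ∀ a b : V, ((0 : V), (symProd a b) ⊗ₜ[ℂ] w) ∈ T2 := by
    intro a b
    have h := Submodule.smul_mem T2 ((1 : ℂ)/2) (hB a b)
    simpa [Prod.smul_mk, TensorProduct.smul_tmul', smul_smul, e2] using h
  have hC' : ∀ (b : V) (q : W), ((0 : V), (symProd v b) ⊗ₜ[ℂ] q) ∈ T2 := by
    intro b q
    have h := Submodule.smul_mem T2 ((1 : ℂ)/2) (hC b q)
    simpa [Prod.smul_mk, TensorProduct.smul_tmul', smul_smul, e2] using h
  have hw' : ∀ p : Sym2M V, ((0 : V), p ⊗ₜ[ℂ] w) ∈ T2 := by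
    intro p
    have hp : p ∈ (⊤ : Submodule ℂ (Sym2M V)) := trivial
    rw [top_eq_span_symProd] at hp
    induction hp using Submodule.span_induction with
    | mem x hx => obtain ⟨a, b, rfl⟩ := hx; exact hB' a b
    | zero => simpa [TensorProduct.zero_tmul, Prod.mk_zero_zero] using Submodule.zero_mem T2
    | add x y hx hy ihx ihy =>
        simpa [TensorProduct.add_tmul, Prod.mk_add_mk] using Submodule.add_mem T2 ihx ihy
    | smul c x hx ih =>
        simpa [TensorProduct.smul_tmul', Prod.smul_mk] using Submodule.smul_mem T2 c ih
  have hv' : ∀ p : Sym2M V, p ∈ circSub (Submodule.span ℂ {v}) (⊤ : Submodule ℂ V) →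
      ∀ q : W, ((0 : V), p ⊗ₜ[ℂ] q) ∈ T2 := by
    intro p hp
    induction hp using Submodule.span_induction with
    | mem x hx =>
        obtain ⟨a, ha, b, -, rfl⟩ := hx
        intro q
        obtain ⟨c, rfl⟩ := Submodule.mem_span_singleton.1 ha
        rw [symProd_smul_left]
        have h := Submodule.smul_mem T2 c (hC' b q)
        simpa [TensorProduct.smul_tmul', Prod.smul_mk] using h
    | zero => intro q; simpa [TensorProduct.zero_tmul, Prod.mk_zero_zero] using Submodule.zero_mem T2
    | add x y hx hy ihx ihy =>
        intro q
        simpa [TensorProduct.add_tmul, Prod.mk_add_mk] using Submodule.add_mem T2 (ihx q) (ihy q)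
    | smul c x hx ih =>
        intro q
        simpa [TensorProduct.smul_tmul', Prod.smul_mk] using Submodule.smul_mem T2 c (ih q)
  have hmain : T2 = LinearMap.range (LinearMap.inl ℂ V (Sym2M V ⊗[ℂ] W)) ⊔
      Submodule.map (LinearMap.inr ℂ V (Sym2M V ⊗[ℂ] W))
        (tspan (⊤ : Submodule ℂ (Sym2M V)) (Submodule.span ℂ {w}) ⊔
         tspan (circSub (Submodule.span ℂ {v}) ⊤) (⊤ : Submodule ℂ W)) := by
    apply le_antisymm
    · rw [hT2, hT]
      refine sup_le (sup_le ?_ ?_) ?_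
      · refine Submodule.span_le.2 ?_
        rintro x ⟨v', w', rfl⟩
        refine Submodule.mem_sup.2 ⟨(v', 0), ⟨v', rfl⟩,
          (0, ((2 : ℂ) • symProd v v') ⊗ₜ[ℂ] w + (sqr v) ⊗ₜ[ℂ] w'), ?_, by simp⟩
        refine ⟨((2 : ℂ) • symProd v v') ⊗ₜ[ℂ] w + (sqr v) ⊗ₜ[ℂ] w', ?_, rfl⟩
        refine Submodule.add_mem _ (Submodule.mem_sup_left ?_) (Submodule.mem_sup_right ?_)
        · exact Submodule.subset_span
            ⟨_, trivial, w, Submodule.mem_span_singleton_self w, rfl⟩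
        · exact Submodule.subset_span ⟨sqr v,
            Submodule.subset_span ⟨v, Submodule.mem_span_singleton_self v, v, trivial, sqr_eq v⟩,
            w', trivial, rfl⟩
      · refine Submodule.span_le.2 ?_
        rintro x ⟨a, b, rfl⟩
        refine Submodule.mem_sup_right ⟨((2 : ℂ) • symProd a b) ⊗ₜ[ℂ] w,
          Submodule.mem_sup_left (Submodule.subset_span
            ⟨_, trivial, w, Submodule.mem_span_singleton_self w, rfl⟩), rfl⟩
      · refine Submodule.span_le.2 ?_
        rintro x ⟨b, q, rfl⟩
        refine Submodule.mem_sup_right ⟨((2 : ℂ) • symProd v b) ⊗ₜ[ℂ] q,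
          Submodule.mem_sup_right (Submodule.subset_span
            ⟨_, Submodule.smul_mem _ _ (Submodule.subset_span
              ⟨v, Submodule.mem_span_singleton_self v, b, trivial, rfl⟩), q, trivial, rfl⟩),
          rfl⟩
    · refine sup_le ?_ ?_
      · rintro x ⟨v', rfl⟩
        have h := Submodule.sub_mem T2 (hA v' 0) (hB v v')
        simpa [Prod.mk_sub_mk, TensorProduct.tmul_zero] using h
      · rw [Submodule.map_le_iff_le_comap]
        refine sup_le ?_ ?_
        · refine Submodule.span_le.2 ?_
          rintro x ⟨p, -, q, hq, rfl⟩
          obtain ⟨c, rfl⟩ := Submodule.mem_span_singleton.1 hq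
          simp only [SetLike.mem_coe, Submodule.mem_comap, LinearMap.inr_apply]
          have h := Submodule.smul_mem T2 c (hw' p)
          simpa [TensorProduct.tmul_smul, Prod.smul_mk] using h
        · refine Submodule.span_le.2 ?_
          rintro x ⟨p, hp, q, -, rfl⟩
          simp only [SetLike.mem_coe, Submodule.mem_comap, LinearMap.inr_apply]
          exact hv' p hp q
  refine ⟨hmain, ?_⟩
  set φ := (TensorProduct.map (sym2Map (Submodule.span ℂ {v}).mkQ)
      (Submodule.span ℂ {w}).mkQ).comp
    (LinearMap.snd ℂ V (Sym2M V ⊗[ℂ] W)) with hφ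
  have hker : LinearMap.ker φ = T2 := by
    rw [hφ, LinearMap.ker_comp, ker_bigmap, comap_snd_eq, hmain]
  have hsurj : Function.Surjective φ := by
    rw [hφ, LinearMap.coe_comp]
    exact (TensorProduct.map_surjective
        (sym2Map_surjective (Submodule.mkQ_surjective _))
        (Submodule.mkQ_surjective _)).comp (fun x => ⟨(0, x), rfl⟩)
  exact ⟨(Submodule.quotEquivOfEq T2 (LinearMap.ker φ) hker.symm).trans
    (φ.quotKerEquivOfSurjective hsurj)⟩
end
end

section
/- Let V, W be finite-dimensional complex vector spaces with dim V = n+1 ≥ 2 and dim W = k ≥ 1, U = V ⊕ (Sym²V ⊗ W), and β = v + v²⊗w ∈ Ŝ with v ≠ 0, w ≠ 0. Then dim(T_β^{(2)}Ŝ / T_βŜ) = n + n(n+1)/2 + n(k−1), and the codimension of T_β^{(2)}Ŝ in U equals (n(n+1)/2)·(k−1). In particular, for (dim V, dim W) = (2, m−1) these numbers are m and m−2 respectively, and for (dim V, dim W) = (3, 2) they are 7 and 3 respectively. -/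
open TensorProduct

noncomputable section

namespace Stmt4Aux
variable {V : Type} [AddCommGroup V] [Module ℂ V]

lemma mk_tmul (x y : V) : (Submodule.Quotient.mk (x ⊗ₜ[ℂ] y) : Sym2M V) = symProd x y := by
  rw [symProd, Submodule.Quotient.eq]
  have h : x ⊗ₜ[ℂ] y - (1/2 : ℂ) • (x ⊗ₜ[ℂ] y + y ⊗ₜ[ℂ] x)
      = (1/2 : ℂ) • (x ⊗ₜ[ℂ] y - y ⊗ₜ[ℂ] x) := by
    rw [smul_add, smul_sub]; module
  rw [h]
  exact Submodule.smul_mem _ _ (Submodule.subset_span ⟨x, y, rfl⟩)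

lemma symProd_comm (x y : V) : symProd x y = symProd y x := by
  rw [symProd, symProd, add_comm]

def sp : V →ₗ[ℂ] V →ₗ[ℂ] Sym2M V :=
  LinearMap.compr₂ (TensorProduct.mk ℂ V V) (antisymRel V).mkQ

lemma sp_apply (x y : V) : sp x y = symProd x y := mk_tmul x y

lemma sqr_eq (x : V) : sqr x = symProd x x := mk_tmul x x

section SymBasis
variable {N : ℕ} (b : Module.Basis (Fin N) ℂ V)

def BB : Sym2 (Fin N) → Sym2M V := fun s =>
  Sym2.lift ⟨fun i j => symProd (b i) (b j), fun _ _ => symProd_comm _ _⟩ s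

lemma BB_mk (i j : Fin N) : BB b s(i, j) = symProd (b i) (b j) := Sym2.lift_mk _ i j

lemma span_BB : Submodule.span ℂ (Set.range (BB b)) = ⊤ := by
  rw [eq_top_iff]
  have h1 : (⊤ : Submodule ℂ (Sym2M V)) = Submodule.map (antisymRel V).mkQ ⊤ := by
    rw [Submodule.map_top, Submodule.range_mkQ]; rfl
  rw [h1, ← Module.Basis.span_eq (b.tensorProduct b), Submodule.map_span]
  refine Submodule.span_le.mpr ?_
  rintro _ ⟨_, ⟨⟨i, j⟩, rfl⟩, rfl⟩
  have : (antisymRel V).mkQ (Module.Basis.tensorProduct b b (i, j)) = BB b s(i, j) := by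
    rw [Module.Basis.tensorProduct_apply, BB_mk, Submodule.mkQ_apply, mk_tmul]
  rw [this]
  exact (Submodule.subset_span ⟨s(i, j), rfl⟩ : BB b s(i, j) ∈ Submodule.span ℂ (Set.range (BB b)))

def phi : V →ₗ[ℂ] V →ₗ[ℂ] (Sym2 (Fin N) → ℂ) :=
  LinearMap.mk₂ ℂ
    (fun x y => Sym2.lift
      ⟨fun i j => b.repr x i * b.repr y j + b.repr x j * b.repr y i, fun i j => by ring⟩)
    (fun x x' y => funext fun s => Sym2.inductionOn s fun i j => by
      simp [Sym2.lift_mk]; ring)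
    (fun c x y => funext fun s => Sym2.inductionOn s fun i j => by
      simp [Sym2.lift_mk]; ring)
    (fun x y y' => funext fun s => Sym2.inductionOn s fun i j => by
      simp [Sym2.lift_mk]; ring)
    (fun c x y => funext fun s => Sym2.inductionOn s fun i j => by
      simp [Sym2.lift_mk]; ring)

def FF : (V ⊗[ℂ] V) →ₗ[ℂ] (Sym2 (Fin N) → ℂ) := TensorProduct.lift (phi b)

lemma antisym_le_ker : antisymRel V ≤ LinearMap.ker (FF b) := by
  rw [antisymRel, Submodule.span_le]
  rintro _ ⟨x, y, rfl⟩
  simp only [SetLike.mem_coe, LinearMap.mem_ker, map_sub]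
  rw [sub_eq_zero]
  funext s
  induction s using Sym2.inductionOn with
  | hf i j => simp [FF, phi, Sym2.lift_mk]; ring

def Fb : Sym2M V →ₗ[ℂ] (Sym2 (Fin N) → ℂ) := Submodule.liftQ _ (FF b) (antisym_le_ker b)

lemma Fb_BB (s t : Sym2 (Fin N)) :
    Fb b (BB b s) t = if s = t then (if s.IsDiag then 2 else 1) else 0 := by
  induction s, t using Sym2.inductionOn₂ with
  | hf i j p q =>
    rw [BB_mk, symProd]
    have : Fb b (Submodule.Quotient.mk ((1/2 : ℂ) • (b i ⊗ₜ[ℂ] b j + b j ⊗ₜ[ℂ] b i)))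
        = FF b ((1/2 : ℂ) • (b i ⊗ₜ[ℂ] b j + b j ⊗ₜ[ℂ] b i)) := rfl
    rw [this]
    simp only [map_smul, map_add, FF, TensorProduct.lift.tmul, Pi.smul_apply, Pi.add_apply,
      phi, LinearMap.mk₂_apply, Sym2.lift_mk, Module.Basis.repr_self, Finsupp.single_apply,
      Sym2.eq_iff, Sym2.mk_isDiag_iff, smul_eq_mul]
    by_cases h1 : i = p <;> by_cases h2 : j = q <;> by_cases h3 : i = q <;> by_cases h4 : j = p <;>
      simp_all <;> ring_nf <;> norm_num
  done

end SymBasis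
section SymBasis2
variable {N : ℕ} (b : Module.Basis (Fin N) ℂ V)

lemma li_BB : LinearIndependent ℂ (BB b) := by
  rw [Fintype.linearIndependent_iff]
  intro g hg t
  have h1 := congrArg (Fb b) hg
  rw [map_sum, map_zero] at h1
  have h2 := congrFun h1 t
  simp only [map_smul, Finset.sum_apply, Pi.smul_apply, Pi.zero_apply, smul_eq_mul] at h2
  have h3 : ∀ s ∈ Finset.univ, g s * Fb b (BB b s) t
      = if s = t then g s * (if (s : Sym2 (Fin N)).IsDiag then 2 else 1) else 0 := by
    intro s _
    rw [Fb_BB, mul_ite, mul_zero]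
  rw [Finset.sum_congr rfl h3, Finset.sum_ite_eq' Finset.univ t] at h2
  simp only [Finset.mem_univ, if_true] at h2
  rcases mul_eq_zero.mp h2 with h | h
  · exact h
  · exfalso; revert h; split <;> norm_num

def symBasis : Module.Basis (Sym2 (Fin N)) ℂ (Sym2M V) :=
  Module.Basis.mk (li_BB b) (by rw [span_BB])

lemma symBasis_apply (s : Sym2 (Fin N)) : symBasis b s = BB b s := Module.Basis.mk_apply _ _ _

omit b in
lemma finrank_Sym2M (b' : Module.Basis (Fin N) ℂ V) :
    Module.finrank ℂ (Sym2M V) = Fintype.card (Sym2 (Fin N)) :=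
  Module.finrank_eq_card_basis (symBasis b')

end SymBasis2
section Maps
variable {W : Type} [AddCommGroup W] [Module ℂ W]

def eWmap (w : W) : Sym2M V →ₗ[ℂ] (Sym2M V ⊗[ℂ] W) :=
  (TensorProduct.mk ℂ (Sym2M V) W).flip w

@[simp] lemma eWmap_apply (w : W) (x : Sym2M V) : eWmap w x = x ⊗ₜ[ℂ] w := rfl

def hMap (v : V) : (V ⊗[ℂ] W) →ₗ[ℂ] (Sym2M V ⊗[ℂ] W) :=
  TensorProduct.map (sp v) LinearMap.id

@[simp] lemma hMap_tmul (v a : V) (y : W) : hMap v (a ⊗ₜ[ℂ] y) = symProd v a ⊗ₜ[ℂ] y := by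
  simp [hMap, sp_apply]

def Lmap (v : V) (w : W) : (V × W) →ₗ[ℂ] (V × (Sym2M V ⊗[ℂ] W)) :=
  (LinearMap.fst ℂ V W).prod
    (((eWmap w).comp ((2 : ℂ) • sp v)).comp (LinearMap.fst ℂ V W)
      + ((TensorProduct.mk ℂ (Sym2M V) W) (sqr v)).comp (LinearMap.snd ℂ V W))

lemma Lmap_apply (v v' : V) (w w' : W) :
    Lmap v w (v', w') = (v', ((2 : ℂ) • symProd v v') ⊗ₜ[ℂ] w + sqr v ⊗ₜ[ℂ] w') := by
  simp [Lmap, sp_apply, TensorProduct.smul_tmul']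

lemma Lmap_injective {N : ℕ} (b : Module.Basis (Fin (N + 1)) ℂ V) (v : V) (hb : b 0 = v) (w : W) :
    Function.Injective (Lmap v w) := by
  rw [← LinearMap.ker_eq_bot, eq_bot_iff]
  rintro ⟨v', w'⟩ hmem
  rw [LinearMap.mem_ker, Lmap_apply, Prod.mk_eq_zero] at hmem
  obtain ⟨rfl, h2⟩ := hmem
  have hsp0 : symProd v (0 : V) = 0 := by rw [← sp_apply]; exact map_zero _
  rw [hsp0, smul_zero, TensorProduct.zero_tmul, zero_add] at h2
  -- now sqr v ⊗ w' = 0 ; apply coordinate functional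
  have hv : v = b 0 := hb.symm
  have hsqr : sqr v = symBasis b s(0, 0) := by
    rw [sqr_eq, symBasis_apply, BB_mk, hv]
  let G : (Sym2M V ⊗[ℂ] W) →ₗ[ℂ] W :=
    (TensorProduct.lid ℂ W).toLinearMap.comp
      (LinearMap.rTensor W ((symBasis b).coord s(0, 0)))
  have hG := congrArg G h2
  rw [map_zero] at hG
  have : G (sqr v ⊗ₜ[ℂ] w') = w' := by
    simp [G, LinearMap.rTensor_tmul, hsqr, Module.Basis.coord_apply, Module.Basis.repr_self]
  rw [this] at hG
  simp [Prod.ext_iff, hG]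

end Maps
section Spans
variable {W : Type} [AddCommGroup W] [Module ℂ W]

lemma span_two_symProd {N : ℕ} (b : Module.Basis (Fin N) ℂ V) :
    Submodule.span ℂ {x : Sym2M V | ∃ v' v'', x = (2 : ℂ) • symProd v' v''} = ⊤ := by
  refine le_antisymm le_top ?_
  rw [← span_BB b]
  refine Submodule.span_le.mpr ?_
  rintro _ ⟨s, rfl⟩
  induction s using Sym2.inductionOn with
  | hf i j =>
    have : BB b s(i, j) = (1/2 : ℂ) • ((2 : ℂ) • symProd (b i) (b j)) := by
      rw [BB_mk, smul_smul]; norm_num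
    rw [this]
    exact Submodule.smul_mem _ _ (Submodule.subset_span ⟨b i, b j, rfl⟩)

lemma S1_eq {N : ℕ} (b : Module.Basis (Fin N) ℂ V) (w : W) :
    Submodule.span ℂ
        {u : V × (Sym2M V ⊗[ℂ] W) | ∃ v' v'' : V,
          u = ((0 : V), ((2 : ℂ) • symProd v' v'') ⊗ₜ[ℂ] w)}
      = Submodule.map (LinearMap.inr ℂ V (Sym2M V ⊗[ℂ] W)) (LinearMap.range (eWmap (V := V) w)) := by
  have hset : {u : V × (Sym2M V ⊗[ℂ] W) | ∃ v' v'' : V,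
      u = ((0 : V), ((2 : ℂ) • symProd v' v'') ⊗ₜ[ℂ] w)}
      = ((LinearMap.inr ℂ V (Sym2M V ⊗[ℂ] W)).comp (eWmap w)) ''
        {x : Sym2M V | ∃ v' v'', x = (2 : ℂ) • symProd v' v''} := by
    ext u
    constructor
    · rintro ⟨v', v'', rfl⟩
      exact ⟨(2 : ℂ) • symProd v' v'', ⟨v', v'', rfl⟩, rfl⟩
    · rintro ⟨x, ⟨v', v'', rfl⟩, rfl⟩
      exact ⟨v', v'', rfl⟩
  rw [hset, ← Submodule.map_span, span_two_symProd b, Submodule.map_top, LinearMap.range_comp]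

lemma S2_eq (v : V) (w : W) :
    Submodule.span ℂ
        {u : V × (Sym2M V ⊗[ℂ] W) | ∃ (v' : V) (w' : W),
          u = ((0 : V), ((2 : ℂ) • symProd v v') ⊗ₜ[ℂ] w')}
      = Submodule.map (LinearMap.inr ℂ V (Sym2M V ⊗[ℂ] W)) (LinearMap.range (hMap (W := W) v)) := by
  have hset : {u : V × (Sym2M V ⊗[ℂ] W) | ∃ (v' : V) (w' : W),
      u = ((0 : V), ((2 : ℂ) • symProd v v') ⊗ₜ[ℂ] w')}
      = ((LinearMap.inr ℂ V (Sym2M V ⊗[ℂ] W)).comp (hMap v)) ''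
        {x : V ⊗[ℂ] W | ∃ a b, a ⊗ₜ[ℂ] b = x} := by
    ext u
    constructor
    · rintro ⟨v', w', rfl⟩
      refine ⟨((2 : ℂ) • v') ⊗ₜ[ℂ] w', ⟨(2 : ℂ) • v', w', rfl⟩, ?_⟩
      have : symProd v ((2 : ℂ) • v') = (2 : ℂ) • symProd v v' := by
        rw [← sp_apply, ← sp_apply, map_smul]
      simp [this]
    · rintro ⟨_, ⟨a, y, rfl⟩, rfl⟩
      refine ⟨(1/2 : ℂ) • a, y, ?_⟩
      have h : (2 : ℂ) • symProd v ((1/2 : ℂ) • a) = symProd v a := by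
        rw [← sp_apply, ← sp_apply, map_smul, smul_smul]; norm_num
      simp only [LinearMap.coe_comp, Function.comp_apply, hMap_tmul, LinearMap.inr_apply]
      rw [Prod.ext_iff]
      refine ⟨rfl, ?_⟩
      show symProd v a ⊗ₜ[ℂ] y = ((2 : ℂ) • symProd v ((1/2 : ℂ) • a)) ⊗ₜ[ℂ] y
      rw [h]
  rw [hset, ← Submodule.map_span, TensorProduct.span_tmul_eq_top, Submodule.map_top,
    LinearMap.range_comp]

end Spans
section T2Struct
variable {W : Type} [AddCommGroup W] [Module ℂ W]

lemma T2_eq (v : V) (w : W) :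
    LinearMap.range (Lmap v w)
        ⊔ Submodule.map (LinearMap.inr ℂ V (Sym2M V ⊗[ℂ] W)) (LinearMap.range (eWmap (V := V) w))
        ⊔ Submodule.map (LinearMap.inr ℂ V (Sym2M V ⊗[ℂ] W)) (LinearMap.range (hMap (W := W) v))
      = Submodule.map (LinearMap.inl ℂ V (Sym2M V ⊗[ℂ] W)) ⊤
        ⊔ Submodule.map (LinearMap.inr ℂ V (Sym2M V ⊗[ℂ] W))
            (LinearMap.range (eWmap (V := V) w) ⊔ LinearMap.range (hMap (W := W) v)) := by
  apply le_antisymm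
  · refine sup_le (sup_le ?_ ?_) ?_
    · rintro _ ⟨⟨v', w'⟩, rfl⟩
      rw [Lmap_apply]
      have hm : ((2 : ℂ) • symProd v v') ⊗ₜ[ℂ] w + sqr v ⊗ₜ[ℂ] w'
          ∈ LinearMap.range (eWmap (V := V) w) ⊔ LinearMap.range (hMap (W := W) v) := by
        refine Submodule.add_mem _ ?_ ?_
        · exact Submodule.mem_sup_left ⟨(2 : ℂ) • symProd v v', rfl⟩
        · refine Submodule.mem_sup_right ⟨v ⊗ₜ[ℂ] w', ?_⟩
          rw [hMap_tmul, ← sqr_eq]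
      have hdec : ((v' : V), ((2 : ℂ) • symProd v v') ⊗ₜ[ℂ] w + sqr v ⊗ₜ[ℂ] w')
          = LinearMap.inl ℂ V (Sym2M V ⊗[ℂ] W) v'
            + LinearMap.inr ℂ V (Sym2M V ⊗[ℂ] W)
                (((2 : ℂ) • symProd v v') ⊗ₜ[ℂ] w + sqr v ⊗ₜ[ℂ] w') := by
        simp
      rw [hdec]
      exact Submodule.add_mem_sup (Submodule.mem_map_of_mem trivial)
        (Submodule.mem_map_of_mem hm)
    · exact le_sup_of_le_right (Submodule.map_mono le_sup_left)
    · exact le_sup_of_le_right (Submodule.map_mono le_sup_right)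
  · refine sup_le ?_ ?_
    · rintro _ ⟨v', -, rfl⟩
      have h1 : Lmap v w (v', 0) = (v', ((2 : ℂ) • symProd v v') ⊗ₜ[ℂ] w) := by
        rw [Lmap_apply, TensorProduct.tmul_zero, add_zero]
      have h2 : LinearMap.inl ℂ V (Sym2M V ⊗[ℂ] W) v'
          = Lmap v w (v', 0)
            - LinearMap.inr ℂ V (Sym2M V ⊗[ℂ] W) (((2 : ℂ) • symProd v v') ⊗ₜ[ℂ] w) := by
        rw [h1]; simp [Prod.ext_iff]
      rw [h2]
      refine Submodule.sub_mem _ ?_ ?_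
      · exact Submodule.mem_sup_left (Submodule.mem_sup_left ⟨(v', 0), rfl⟩)
      · exact Submodule.mem_sup_left (Submodule.mem_sup_right
          (Submodule.mem_map_of_mem ⟨(2 : ℂ) • symProd v v', rfl⟩))
    · rw [Submodule.map_sup]
      exact sup_le (le_sup_of_le_left le_sup_right) le_sup_right

lemma finrank_inl_sup_inr {M P : Type} [AddCommGroup M] [Module ℂ M] [AddCommGroup P] [Module ℂ P]
    [FiniteDimensional ℂ M] [FiniteDimensional ℂ P] (Q : Submodule ℂ P) :
    Module.finrank ℂ
        ((Submodule.map (LinearMap.inl ℂ M P) ⊤ ⊔ Submodule.map (LinearMap.inr ℂ M P) Q :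
          Submodule ℂ (M × P)))
      = Module.finrank ℂ M + Module.finrank ℂ Q := by
  have hinf : Submodule.map (LinearMap.inl ℂ M P) ⊤ ⊓ Submodule.map (LinearMap.inr ℂ M P) Q
      = ⊥ := by
    rw [eq_bot_iff]
    rintro x ⟨⟨a, -, rfl⟩, ⟨b, -, hb⟩⟩
    have ha : a = 0 := by
      have := congrArg Prod.fst hb
      simpa using this.symm
    simp [ha]
  have key := Submodule.finrank_sup_add_finrank_inf_eq
    (Submodule.map (LinearMap.inl ℂ M P) ⊤) (Submodule.map (LinearMap.inr ℂ M P) Q)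
  rw [hinf, finrank_bot ℂ (M × P), add_zero] at key
  rw [key]
  congr 1
  · rw [Submodule.map_top, LinearMap.finrank_range_of_inj LinearMap.inl_injective]
  · exact (Submodule.equivMapOfInjective _ LinearMap.inr_injective Q).symm.finrank_eq
end T2Struct
section MQ
variable {W : Type} [AddCommGroup W] [Module ℂ W]
variable [FiniteDimensional ℂ V] [FiniteDimensional ℂ W]

lemma finrank_M_sup {N K : ℕ} (b : Module.Basis (Fin (N + 1)) ℂ V) (c : Module.Basis (Fin (K + 1)) ℂ W)
    (v : V) (w : W) (hb : b 0 = v) (hc : c 0 = w) :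
    Module.finrank ℂ
        ((LinearMap.range (eWmap (V := V) w) ⊔ LinearMap.range (hMap (W := W) v) :
          Submodule ℂ (Sym2M V ⊗[ℂ] W)))
        + (N + 1)
      = Fintype.card (Sym2 (Fin (N + 1))) + (N + 1) * (K + 1) := by
  classical
  set d : Module.Basis (Sym2 (Fin (N + 1)) × Fin (K + 1)) ℂ (Sym2M V ⊗[ℂ] W) :=
    Module.Basis.tensorProduct (symBasis b) c with hd
  set F1 : Finset (Sym2 (Fin (N + 1)) × Fin (K + 1)) :=
    Finset.univ.image (fun s : Sym2 (Fin (N + 1)) => (s, (0 : Fin (K + 1)))) with hF1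
  set F2 : Finset (Sym2 (Fin (N + 1)) × Fin (K + 1)) :=
    Finset.univ.image
      (fun p : Fin (N + 1) × Fin (K + 1) => (s((0 : Fin (N + 1)), p.1), p.2)) with hF2
  -- identification of the two ranges as spans of basis vectors
  have h1 : LinearMap.range (eWmap (V := V) w) = Submodule.span ℂ (⇑d '' ↑F1) := by
    rw [← Submodule.map_top, ← Module.Basis.span_eq (symBasis b), Submodule.map_span]
    congr 1
    ext x
    constructor
    · rintro ⟨_, ⟨s, rfl⟩, rfl⟩
      refine ⟨(s, 0), by simp [hF1], ?_⟩
      simp [hd, Module.Basis.tensorProduct_apply', hc]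
    · rintro ⟨⟨s, j⟩, hj, rfl⟩
      simp only [hF1, Finset.coe_image, Finset.coe_univ, Set.image_univ, Set.mem_range] at hj
      obtain ⟨s', hs'⟩ := hj
      have hs'' : (s', (0 : Fin (K + 1))) = (s, j) := hs'
      injection hs'' with h1' h2'
      subst h1'
      rw [← h2']
      exact ⟨symBasis b s', ⟨s', rfl⟩, by simp [hd, Module.Basis.tensorProduct_apply', hc]⟩
  have h2 : LinearMap.range (hMap (W := W) v) = Submodule.span ℂ (⇑d '' ↑F2) := by
    rw [← Submodule.map_top, ← Module.Basis.span_eq (b.tensorProduct c), Submodule.map_span]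
    congr 1
    ext x
    constructor
    · rintro ⟨_, ⟨⟨i, j⟩, rfl⟩, rfl⟩
      refine ⟨(s((0 : Fin (N + 1)), i), j), by simp [hF2], ?_⟩
      simp [hd, Module.Basis.tensorProduct_apply, Module.Basis.tensorProduct_apply', hMap_tmul,
        symBasis_apply, BB_mk, hb]
    · rintro ⟨⟨s, j⟩, hj, rfl⟩
      simp only [hF2, Finset.coe_image, Finset.coe_univ, Set.image_univ, Set.mem_range] at hj
      obtain ⟨⟨i, j'⟩, hij⟩ := hj
      have hij' : (s((0 : Fin (N + 1)), i), j') = (s, j) := hij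
      injection hij' with hs hj'
      subst hj'
      refine ⟨b.tensorProduct c (i, j'), ⟨(i, j'), rfl⟩, ?_⟩
      rw [Module.Basis.tensorProduct_apply, hMap_tmul, hd, Module.Basis.tensorProduct_apply', ← hs,
        symBasis_apply, BB_mk, hb]
  have hsup : LinearMap.range (eWmap (V := V) w) ⊔ LinearMap.range (hMap (W := W) v)
      = Submodule.span ℂ (↑((F1 ∪ F2).image d)) := by
    have hcoe : (↑(Finset.image (⇑d) (F1 ∪ F2)) : Set (Sym2M V ⊗[ℂ] W))
        = ⇑d '' (↑F1 ∪ ↑F2) := by rw [Finset.coe_image, Finset.coe_union]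
    rw [h1, h2, ← Submodule.span_union, ← Set.image_union, ← hcoe]
  -- linear independence of the basis subfamily
  have hli0 : LinearIndependent ℂ (fun x : (↑(F1 ∪ F2) : Set (Sym2 (Fin (N + 1)) × Fin (K + 1))) =>
      d x) := d.linearIndependent.comp _ Subtype.val_injective
  have hli : LinearIndependent ℂ ((↑) : ((F1 ∪ F2).image d : Finset (Sym2M V ⊗[ℂ] W)) →
      (Sym2M V ⊗[ℂ] W)) := by
    have h := (show LinearIndepOn ℂ d (↑(F1 ∪ F2)) from hli0).id_image
    rw [← Finset.coe_image] at h; exact h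
  have hrank : Module.finrank ℂ
      ((LinearMap.range (eWmap (V := V) w) ⊔ LinearMap.range (hMap (W := W) v) :
        Submodule ℂ (Sym2M V ⊗[ℂ] W))) = ((F1 ∪ F2).image d).card := by
    rw [hsup]
    exact finrank_span_finset_eq_card hli
  rw [hrank, Finset.card_image_of_injective _ d.injective]
  -- cardinality count
  have hcard1 : F1.card = Fintype.card (Sym2 (Fin (N + 1))) := by
    rw [hF1, Finset.card_image_of_injective, Finset.card_univ]
    intro a b h
    exact (Prod.ext_iff.mp h).1
  have hinj2 : Function.Injective
      (fun p : Fin (N + 1) × Fin (K + 1) => ((s((0 : Fin (N + 1)), p.1), p.2) :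
        Sym2 (Fin (N + 1)) × Fin (K + 1))) := by
    rintro ⟨i, j⟩ ⟨i', j'⟩ h
    obtain ⟨hs, hj⟩ := Prod.mk.injEq _ _ _ _ ▸ h
    rw [Sym2.eq_iff] at hs
    have hi : i = i' := by
      rcases hs with ⟨-, h2⟩ | ⟨h1, h2⟩
      · exact h2
      · exact h2.trans h1
    exact Prod.ext hi hj
  have hcard2 : F2.card = (N + 1) * (K + 1) := by
    rw [hF2, Finset.card_image_of_injective _ hinj2, Finset.card_univ, Fintype.card_prod,
      Fintype.card_fin, Fintype.card_fin]
  have hinter : F1 ∩ F2 = Finset.univ.image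
      (fun i : Fin (N + 1) => ((s((0 : Fin (N + 1)), i), (0 : Fin (K + 1))) :
        Sym2 (Fin (N + 1)) × Fin (K + 1))) := by
    ext ⟨s, j⟩
    simp only [Finset.mem_inter, hF1, hF2, Finset.mem_image, Finset.mem_univ, true_and]
    constructor
    · rintro ⟨⟨s', hs'⟩, ⟨⟨i, j'⟩, hij⟩⟩
      have hs'' : (s', (0 : Fin (K + 1))) = (s, j) := hs'
      have hij' : (s((0 : Fin (N + 1)), i), j') = (s, j) := hij
      injection hs'' with h1' h2'
      injection hij' with h3' h4'
      exact ⟨i, Prod.ext h3' h2'⟩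
    · rintro ⟨i, hi⟩
      have hi' : (s((0 : Fin (N + 1)), i), (0 : Fin (K + 1))) = (s, j) := hi
      injection hi' with h1' h2'
      constructor
      · exact ⟨s, by rw [← h2']⟩
      · exact ⟨(i, j), Prod.ext h1' rfl⟩
  have hcardinter : (F1 ∩ F2).card = N + 1 := by
    rw [hinter, Finset.card_image_of_injective, Finset.card_univ, Fintype.card_fin]
    intro a b h
    have := (Prod.ext_iff.mp h).1
    rw [Sym2.eq_iff] at this
    rcases this with ⟨-, h2⟩ | ⟨h1, h2⟩
    · exact h2
    · exact h2.trans h1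
  have := Finset.card_union_add_card_inter F1 F2
  omega

end MQ
end Stmt4Aux

namespace Stmt4Aux2
variable {V : Type} [AddCommGroup V] [Module ℂ V]

lemma exists_basis_zero_eq [FiniteDimensional ℂ V] {v : V} (hv : v ≠ 0) {N : ℕ}
    (hN : Module.finrank ℂ V = N + 1) : ∃ b : Module.Basis (Fin (N + 1)) ℂ V, b 0 = v := by
  have li : LinearIndepOn ℂ id ({v} : Set V) := (linearIndepOn_singleton_iff ℂ).mpr hv
  let B := Module.Basis.extend li
  have hvmem : v ∈ li.extend (Set.subset_univ _) := li.subset_extend _ rfl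
  haveI : Fintype (li.extend (Set.subset_univ ({v} : Set V))) :=
    FiniteDimensional.fintypeBasisIndex B
  have hcard : Fintype.card (li.extend (Set.subset_univ ({v} : Set V))) = N + 1 := by
    rw [← Module.finrank_eq_card_basis B, hN]
  let e0 : (li.extend (Set.subset_univ ({v} : Set V))) ≃ Fin (N + 1) :=
    Fintype.equivFinOfCardEq hcard
  let σ := e0.trans (Equiv.swap (e0 ⟨v, hvmem⟩) 0)
  refine ⟨B.reindex σ, ?_⟩
  have hσ : σ ⟨v, hvmem⟩ = 0 := by
    simp [σ, Equiv.swap_apply_left]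
  rw [Module.Basis.reindex_apply, ← hσ, Equiv.symm_apply_apply]
  exact Module.Basis.extend_apply_self li ⟨v, hvmem⟩

end Stmt4Aux2

open Stmt4Aux Stmt4Aux2 in
/-- with `dim V = n+1 ≥ 2`, `dim W = k ≥ 1`,
`dim(T_β⁽²⁾Ŝ / T_βŜ) = n + n(n+1)/2 + n(k−1)` and the codimension of `T_β⁽²⁾Ŝ` in `U` is
`(n(n+1)/2)·(k−1)`; in particular these are `m, m−2` for `(dim V, dim W) = (2, m−1)` and
`7, 3` for `(dim V, dim W) = (3, 2)`. -/

theorem stmt4 (V W : Type) [AddCommGroup V] [Module ℂ V] [AddCommGroup W] [Module ℂ W]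
    [FiniteDimensional ℂ V] [FiniteDimensional ℂ W] (n k : ℕ)
    (hV : Module.finrank ℂ V = n + 1) (hn : 1 ≤ n)
    (hW : Module.finrank ℂ W = k) (hk : 1 ≤ k)
    (v : V) (w : W) (hv : v ≠ 0) (hw : w ≠ 0)
    (T : Submodule ℂ (V × (Sym2M V ⊗[ℂ] W)))
    (hT : T = Submodule.span ℂ
      {u | ∃ (v' : V) (w' : W),
        u = (v', ((2 : ℂ) • symProd v v') ⊗ₜ[ℂ] w + (sqr v) ⊗ₜ[ℂ] w')})
    (T2 : Submodule ℂ (V × (Sym2M V ⊗[ℂ] W)))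
    (hT2 : T2 = T ⊔
      Submodule.span ℂ
        {u | ∃ (v' v'' : V), u = ((0 : V), ((2 : ℂ) • symProd v' v'') ⊗ₜ[ℂ] w)} ⊔
      Submodule.span ℂ
        {u | ∃ (v' : V) (w' : W), u = ((0 : V), ((2 : ℂ) • symProd v v') ⊗ₜ[ℂ] w')}) :
    Module.finrank ℂ T2 = Module.finrank ℂ T + (n + n * (n + 1) / 2 + n * (k - 1)) ∧
    Module.finrank ℂ (V × (Sym2M V ⊗[ℂ] W)) =
      Module.finrank ℂ T2 + (n * (n + 1) / 2) * (k - 1) ∧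
    (n = 1 → n + n * (n + 1) / 2 + n * (k - 1) = k + 1 ∧ (n * (n + 1) / 2) * (k - 1) = k - 1) ∧
    (n = 2 ∧ k = 2 → n + n * (n + 1) / 2 + n * (k - 1) = 7 ∧ (n * (n + 1) / 2) * (k - 1) = 3) := by
  classical
  obtain ⟨k', rfl⟩ : ∃ k', k = k' + 1 := ⟨k - 1, by omega⟩
  obtain ⟨b, hb0⟩ := exists_basis_zero_eq hv (N := n) (by rw [hV])
  obtain ⟨c, hc0⟩ := exists_basis_zero_eq hw (N := k') (by rw [hW])
  -- T is the range of Lmap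
  have hTr : T = LinearMap.range (Lmap v w) := by
    rw [hT]
    have hset : {u : V × (Sym2M V ⊗[ℂ] W) | ∃ (v' : V) (w' : W),
        u = (v', ((2 : ℂ) • symProd v v') ⊗ₜ[ℂ] w + (sqr v) ⊗ₜ[ℂ] w')}
        = Set.range (Lmap v w) := by
      ext u
      constructor
      · rintro ⟨v', w', rfl⟩
        exact ⟨(v', w'), Lmap_apply v v' w w'⟩
      · rintro ⟨⟨v', w'⟩, rfl⟩
        exact ⟨v', w', (Lmap_apply v v' w w')⟩
    rw [hset, ← LinearMap.coe_range, Submodule.span_eq]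
  have hfT : Module.finrank ℂ T = (n + 1) + (k' + 1) := by
    rw [hTr, LinearMap.finrank_range_of_inj (Lmap_injective b v hb0 w), Module.finrank_prod,
      hV, hW]
  -- T2 structure
  have hT2r : T2 = Submodule.map (LinearMap.inl ℂ V (Sym2M V ⊗[ℂ] W)) ⊤
      ⊔ Submodule.map (LinearMap.inr ℂ V (Sym2M V ⊗[ℂ] W))
          (LinearMap.range (eWmap (V := V) w) ⊔ LinearMap.range (hMap (W := W) v)) := by
    rw [hT2, hTr, S1_eq b w, S2_eq v w, T2_eq v w]
  set fQ := Module.finrank ℂ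
    ((LinearMap.range (eWmap (V := V) w) ⊔ LinearMap.range (hMap (W := W) v) :
      Submodule ℂ (Sym2M V ⊗[ℂ] W))) with hfQdef
  have hfT2 : Module.finrank ℂ T2 = (n + 1) + fQ := by
    rw [hT2r, finrank_inl_sup_inr, hV]
  set S := Fintype.card (Sym2 (Fin (n + 1))) with hSdef
  have hfQ : fQ + (n + 1) = S + (n + 1) * (k' + 1) := finrank_M_sup b c v w hb0 hc0
  have hU : Module.finrank ℂ (V × (Sym2M V ⊗[ℂ] W)) = (n + 1) + S * (k' + 1) := by
    rw [Module.finrank_prod, Module.finrank_tensorProduct, hV, hW, finrank_Sym2M b]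
  have hS : S = (n + 2) * (n + 1) / 2 := by
    rw [hSdef, Sym2.card, Fintype.card_fin, Nat.choose_two_right]
    norm_num
  -- arithmetic
  have e2 : (n + 2) * (n + 1) = n * (n + 1) + 2 * n + 2 := by ring
  have e3 : n * (n + 1) % 2 = 0 := Nat.even_iff.mp (Nat.even_mul_succ_self n)
  have hS' : S = n * (n + 1) / 2 + n + 1 := by
    rw [hS]
    generalize hA : n * (n + 1) = A at e2 e3 ⊢
    generalize hC : (n + 2) * (n + 1) = C at e2 ⊢
    omega
  have e1 : (n + 1) * (k' + 1) = n * k' + n + k' + 1 := by ring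
  have e4 : S * (k' + 1) = S * k' + S := by ring
  have e5 : S * k' = (n * (n + 1) / 2) * k' + n * k' + k' := by rw [hS']; ring
  refine ⟨?_, ?_, ?_, ?_⟩
  · rw [hfT2, hfT]
    have hk1 : (k' + 1) - 1 = k' := rfl
    rw [hk1]
    generalize hP : n * k' = P at e1 ⊢
    generalize hB : (n + 1) * (k' + 1) = B at e1 hfQ
    generalize ha : n * (n + 1) / 2 = a at hS' ⊢
    omega
  · rw [hU, hfT2]
    have hk1 : (k' + 1) - 1 = k' := rfl
    rw [hk1]
    generalize hP : n * k' = P at e1 e5 ⊢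
    generalize hB : (n + 1) * (k' + 1) = B at e1 hfQ
    generalize hD : (n * (n + 1) / 2) * k' = D at e5 ⊢
    generalize hSk1 : S * (k' + 1) = Sk1 at e4 ⊢
    generalize hSk : S * k' = Sk at e4 e5
    omega
  · rintro rfl
    constructor <;> omega
  · rintro ⟨rfl, hk2⟩
    have : k' = 1 := by omega
    subst this
    constructor <;> norm_num
end
end

section
/- Let V, W be finite-dimensional complex vector spaces, U = V ⊕ (Sym²V ⊗ W), and Ŝ = { v + v²⊗w : v ∈ V, w ∈ W }. Let Ξ ⊆ ∧²U be the linear span of all elements β ∧ ξ with β ∈ Ŝ and ξ ∈ T_βŜ. Then Ξ contains ∧²V and V ∧ (Sym²V ⊗ W) (as subspaces of ∧²U under the canonical inclusions). -/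
open TensorProduct

noncomputable section

section Helpers

lemma pr_add0 {A B : Type} [AddCommGroup A] [AddCommGroup B] (x y : A) :
    ((x + y, (0:B)) : A × B) = (x, 0) + (y, 0) := by
  rw [Prod.mk_add_mk, add_zero]

lemma pr_sub0 {A B : Type} [AddCommGroup A] [AddCommGroup B] (x y : A) :
    ((x - y, (0:B)) : A × B) = (x, 0) - (y, 0) := by
  rw [Prod.mk_sub_mk, sub_zero]

lemma pr_0add {A B : Type} [AddCommGroup A] [AddCommGroup B] (p q : B) :
    (((0:A), p + q) : A × B) = (0, p) + (0, q) := by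
  rw [Prod.mk_add_mk, add_zero]

lemma pr_0sub {A B : Type} [AddCommGroup A] [AddCommGroup B] (p q : B) :
    (((0:A), p - q) : A × B) = (0, p) - (0, q) := by
  rw [Prod.mk_sub_mk, sub_zero]

lemma pr_0neg {A B : Type} [AddCommGroup A] [AddCommGroup B] (p : B) :
    (((0:A), -p) : A × B) = -(((0:A), p) : A × B) := by
  rw [Prod.neg_mk, neg_zero]

lemma pr_0smul {A B : Type} [AddCommGroup A] [AddCommGroup B] [Module ℂ A] [Module ℂ B]
    (c : ℂ) (p : B) : (((0:A), c • p) : A × B) = c • (((0:A), p) : A × B) := by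
  rw [Prod.smul_mk, smul_zero]

lemma pr_split {A B : Type} [AddCommGroup A] [AddCommGroup B] (x : A) (p : B) :
    ((x, p) : A × B) = ((x, 0) : A × B) + ((0, p) : A × B) := by
  rw [Prod.mk_add_mk, add_zero, zero_add]

variable {V : Type} [AddCommGroup V] [Module ℂ V]

lemma my_sqr_add (u a : V) : sqr (u + a) = sqr u + sqr a + (2:ℂ) • symProd u a := by
  have h : (u+a) ⊗ₜ[ℂ] (u+a)
      = u ⊗ₜ[ℂ] u + a ⊗ₜ[ℂ] a + (2:ℂ) • ((1/2:ℂ) • (u ⊗ₜ[ℂ] a + a ⊗ₜ[ℂ] u)) := by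
    rw [smul_smul]
    norm_num [tmul_add, add_tmul]
    abel
  show Submodule.Quotient.mk _ = _
  rw [h]
  simp [sqr, symProd, Submodule.Quotient.mk_add, Submodule.Quotient.mk_smul]
  erw [smul_add, smul_smul, smul_smul]
  norm_num
  erw [one_smul, one_smul]
  rfl

lemma my_sqr_sub (u a : V) : sqr (u - a) = sqr u + sqr a - (2:ℂ) • symProd u a := by
  have h : (u-a) ⊗ₜ[ℂ] (u-a)
      = u ⊗ₜ[ℂ] u + a ⊗ₜ[ℂ] a - (2:ℂ) • ((1/2:ℂ) • (u ⊗ₜ[ℂ] a + a ⊗ₜ[ℂ] u)) := by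
    rw [smul_smul]
    norm_num [tmul_sub, sub_tmul]
    abel
  show Submodule.Quotient.mk _ = _
  rw [h]
  simp [sqr, symProd, Submodule.Quotient.mk_sub, Submodule.Quotient.mk_smul]
  erw [smul_add, smul_smul, smul_smul]
  norm_num
  erw [one_smul, one_smul]
  rfl

lemma my_mk_tmul (u v : V) :
    (Submodule.Quotient.mk (u ⊗ₜ[ℂ] v) : Sym2M V) = symProd u v := by
  rw [symProd, Submodule.Quotient.eq]
  have h : u ⊗ₜ[ℂ] v - (1/2 : ℂ) • (u ⊗ₜ[ℂ] v + v ⊗ₜ[ℂ] u)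
      = (1/2 : ℂ) • (u ⊗ₜ[ℂ] v - v ⊗ₜ[ℂ] u) := by module
  rw [h]
  exact Submodule.smul_mem _ _ (Submodule.subset_span ⟨u, v, rfl⟩)

lemma my_symProd_eq (u v : V) :
    symProd u v = (1/2 : ℂ) • (sqr (u+v) - sqr u - sqr v) := by
  rw [my_sqr_add]
  module

end Helpers

/-- let `Ξ ⊆ ∧²U` (realized inside `U ⊗ U` as the span of elements
`β⊗ξ − ξ⊗β` with `β ∈ Ŝ` and `ξ ∈ T_βŜ`).  Then `Ξ` contains `∧²V` and
`V ∧ (Sym²V ⊗ W)`. -/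
theorem stmt10 (V W : Type) [AddCommGroup V] [Module ℂ V] [AddCommGroup W] [Module ℂ W]
    [FiniteDimensional ℂ V] [FiniteDimensional ℂ W]
    (h2 : 2 ≤ Module.finrank ℂ V) (h1 : 1 ≤ Module.finrank ℂ W)
    (Ξ : Submodule ℂ ((V × (Sym2M V ⊗[ℂ] W)) ⊗[ℂ] (V × (Sym2M V ⊗[ℂ] W))))
    (hΞ : Ξ = Submodule.span ℂ
      {x | ∃ (v : V) (w : W) (v' : V) (w' : W),
        x = ((v, (sqr v) ⊗ₜ[ℂ] w) : V × (Sym2M V ⊗[ℂ] W)) ⊗ₜ[ℂ]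
              ((v', ((2 : ℂ) • symProd v v') ⊗ₜ[ℂ] w + (sqr v) ⊗ₜ[ℂ] w')) -
            ((v', ((2 : ℂ) • symProd v v') ⊗ₜ[ℂ] w + (sqr v) ⊗ₜ[ℂ] w') :
              V × (Sym2M V ⊗[ℂ] W)) ⊗ₜ[ℂ] ((v, (sqr v) ⊗ₜ[ℂ] w))}) :
    (∀ a b : V,
      ((a, 0) : V × (Sym2M V ⊗[ℂ] W)) ⊗ₜ[ℂ] ((b, 0) : V × (Sym2M V ⊗[ℂ] W)) -
        ((b, 0) : V × (Sym2M V ⊗[ℂ] W)) ⊗ₜ[ℂ] ((a, 0) : V × (Sym2M V ⊗[ℂ] W)) ∈ Ξ) ∧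
    (∀ (a : V) (t : Sym2M V ⊗[ℂ] W),
      ((a, 0) : V × (Sym2M V ⊗[ℂ] W)) ⊗ₜ[ℂ] ((0, t) : V × (Sym2M V ⊗[ℂ] W)) -
        ((0, t) : V × (Sym2M V ⊗[ℂ] W)) ⊗ₜ[ℂ] ((a, 0) : V × (Sym2M V ⊗[ℂ] W)) ∈ Ξ) := by
  have gen : ∀ (v : V) (w : W) (v' : V) (w' : W),
      ((v, (sqr v) ⊗ₜ[ℂ] w) : V × (Sym2M V ⊗[ℂ] W)) ⊗ₜ[ℂ]
          ((v', ((2 : ℂ) • symProd v v') ⊗ₜ[ℂ] w + (sqr v) ⊗ₜ[ℂ] w')) -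
        ((v', ((2 : ℂ) • symProd v v') ⊗ₜ[ℂ] w + (sqr v) ⊗ₜ[ℂ] w') :
          V × (Sym2M V ⊗[ℂ] W)) ⊗ₜ[ℂ] ((v, (sqr v) ⊗ₜ[ℂ] w)) ∈ Ξ := by
    intro v w v' w'
    rw [hΞ]
    exact Submodule.subset_span ⟨v, w, v', w', rfl⟩
  clear hΞ
  have hq : ∀ (v : V) (w : W),
      ((v, 0) : V × (Sym2M V ⊗[ℂ] W)) ⊗ₜ[ℂ] ((0, (sqr v) ⊗ₜ[ℂ] w) : V × (Sym2M V ⊗[ℂ] W)) -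
        ((0, (sqr v) ⊗ₜ[ℂ] w) : V × (Sym2M V ⊗[ℂ] W)) ⊗ₜ[ℂ] ((v, 0) : V × (Sym2M V ⊗[ℂ] W))
        ∈ Ξ := by
    intro v w
    have h := gen v 0 0 w
    simpa [tmul_zero] using h
  have hE : ∀ (u a : V) (w : W),
      (((u, 0) : V × (Sym2M V ⊗[ℂ] W)) ⊗ₜ[ℂ]
          ((0, ((2:ℂ) • symProd u a) ⊗ₜ[ℂ] w) : V × (Sym2M V ⊗[ℂ] W)) -
        ((0, ((2:ℂ) • symProd u a) ⊗ₜ[ℂ] w) : V × (Sym2M V ⊗[ℂ] W)) ⊗ₜ[ℂ]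
          ((u, 0) : V × (Sym2M V ⊗[ℂ] W))) -
      (((a, 0) : V × (Sym2M V ⊗[ℂ] W)) ⊗ₜ[ℂ]
          ((0, (sqr u) ⊗ₜ[ℂ] w) : V × (Sym2M V ⊗[ℂ] W)) -
        ((0, (sqr u) ⊗ₜ[ℂ] w) : V × (Sym2M V ⊗[ℂ] W)) ⊗ₜ[ℂ]
          ((a, 0) : V × (Sym2M V ⊗[ℂ] W))) ∈ Ξ := by
    intro u a w
    have h := Ξ.smul_mem ((1:ℂ)/2) (Ξ.sub_mem (gen u w a 0) (gen u (-w) a 0))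
    convert h using 1
    simp only [tmul_zero, add_zero, tmul_neg]
    rw [pr_split u ((sqr u) ⊗ₜ[ℂ] w), pr_split a (((2:ℂ) • symProd u a) ⊗ₜ[ℂ] w),
      pr_split u (-((sqr u) ⊗ₜ[ℂ] w)), pr_split a (-(((2:ℂ) • symProd u a) ⊗ₜ[ℂ] w))]
    simp only [pr_0neg, tmul_add, add_tmul, tmul_neg, neg_tmul]
    module
  have hsq : ∀ (a u : V) (w : W),
      ((a, 0) : V × (Sym2M V ⊗[ℂ] W)) ⊗ₜ[ℂ] ((0, (sqr u) ⊗ₜ[ℂ] w) : V × (Sym2M V ⊗[ℂ] W)) -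
        ((0, (sqr u) ⊗ₜ[ℂ] w) : V × (Sym2M V ⊗[ℂ] W)) ⊗ₜ[ℂ] ((a, 0) : V × (Sym2M V ⊗[ℂ] W))
        ∈ Ξ := by
    intro a u w
    have h := Ξ.sub_mem
      (Ξ.smul_mem ((1:ℂ)/4) (Ξ.sub_mem (Ξ.sub_mem (hq (u+a) w) (hq (u-a) w))
        (Ξ.smul_mem (2:ℂ) (hq a w))))
      (Ξ.smul_mem ((1:ℂ)/2) (hE u a w))
    convert h using 1
    rw [my_sqr_add u a, my_sqr_sub u a, pr_add0 u a, pr_sub0 u a]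
    simp only [add_tmul, sub_tmul, pr_0add, pr_0sub, tmul_add, tmul_sub]
    module
  refine ⟨?_, ?_⟩
  · intro a b
    have h := gen a 0 b 0
    simpa [tmul_zero] using h
  · intro a t
    induction t using TensorProduct.induction_on with
    | zero =>
      simp [Prod.mk_zero_zero]
    | tmul s w =>
      obtain ⟨x, rfl⟩ := Submodule.Quotient.mk_surjective _ s
      induction x using TensorProduct.induction_on with
      | zero =>
        rw [show (Submodule.Quotient.mk 0 : Sym2M V) = (0 : Sym2M V) from Submodule.Quotient.mk_zero _]
        simp [Submodule.Quotient.mk_zero, Prod.mk_zero_zero]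
      | tmul u v =>
        rw [my_mk_tmul, my_symProd_eq]
        have h := Ξ.smul_mem ((1:ℂ)/2)
          (Ξ.sub_mem (Ξ.sub_mem (hsq a (u+v) w) (hsq a u w)) (hsq a v w))
        convert h using 1
        simp only [smul_sub, sub_tmul, ← smul_tmul', pr_0sub, pr_0smul, tmul_sub,
          tmul_smul]
        module
      | add x y hx hy =>
        have h := Ξ.add_mem hx hy
        convert h using 1
        erw [Submodule.Quotient.mk_add, add_tmul]
        simp only [add_tmul, pr_0add, tmul_add]
        module
    | add x y hx hy =>
      have h := Ξ.add_mem hx hy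
      convert h using 1
      simp only [pr_0add, tmul_add, add_tmul]
      module
end
end
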